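/- arXiv:1412.0608 — 4 statements merged into one kernel-verified Lean document; each statement's English description precedes it below -/
import Mathlib

section
/- For all real z > 0, the Digamma function ψ satisfies the lower bound ψ(z + 1/2) − ψ(z) > 1/(2z). -/
/-!
Since `log Γ` is convex, `ψ` is monotone on `(0, ∞)`, and with `ψ(x + 1) = ψ(x) + 1/x` this traps
`ψ(x + 1/2) - ψ(x)` in `[0, 1/x]`. Hence `D(x) = ψ(x + 1/2) - ψ(x) - 1/(2x)` tends to `0`, while the
functional equation gives `D(x) - D(x + 1) = 1/(2x) - 2/(2x + 1) + 1/(2x + 2) > 0` by strict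
convexity of `t ↦ 1/t`. A function that decreases along unit steps and tends to `0` is
nonnegative, so `D(z) > D(z + 1) ≥ 0`.
-/

noncomputable def digamma (z : ℝ) : ℝ := deriv Real.Gamma z / Real.Gamma z

open Real Filter Topology Set

theorem differentiableAt_Gamma_of_pos {x : ℝ} (hx : 0 < x) : DifferentiableAt ℝ Gamma x :=
  differentiableAt_Gamma fun m => by linarith [m.cast_nonneg (α := ℝ)]

theorem hasDerivAt_log_Gamma {x : ℝ} (hx : 0 < x) :
    HasDerivAt (fun y => log (Gamma y)) (digamma x) x :=
  (differentiableAt_Gamma_of_pos hx).hasDerivAt.log (Gamma_pos_of_pos hx).ne'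

theorem monotoneOn_digamma : MonotoneOn digamma (Ioi 0) := by
  have hderiv : EqOn (deriv (log ∘ Gamma)) digamma (Ioi 0) := fun x hx =>
    (hasDerivAt_log_Gamma hx).deriv
  exact (convexOn_log_Gamma.monotoneOn_deriv fun x hx =>
    (hasDerivAt_log_Gamma hx).differentiableAt).congr hderiv

theorem digamma_add_one {x : ℝ} (hx : 0 < x) : digamma (x + 1) = digamma x + 1 / x := by
  have hΓ : (fun y => Gamma (y + 1)) =ᶠ[𝓝 x] fun y => y * Gamma y := by
    filter_upwards [eventually_gt_nhds hx] with y hy using Gamma_add_one hy.ne'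
  calc digamma (x + 1) = logDeriv (fun y => Gamma (y + 1)) x := by
        rw [logDeriv_apply, deriv_comp_add_const]; rfl
    _ = logDeriv (fun y => y * Gamma y) x := (logDeriv_congr_nhds hΓ).eq_of_nhds
    _ = logDeriv id x + logDeriv Gamma x := logDeriv_mul (f := id) x hx.ne'
          (Gamma_pos_of_pos hx).ne' differentiableAt_id (differentiableAt_Gamma_of_pos hx)
    _ = digamma x + 1 / x := by rw [logDeriv_id, add_comm]; rfl

theorem digamma_add_half_sub_nonneg {x : ℝ} (hx : 0 < x) : 0 ≤ digamma (x + 1/2) - digamma x :=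
  sub_nonneg.2 <| monotoneOn_digamma hx (by simp only [mem_Ioi]; linarith) (by linarith)

theorem digamma_add_half_sub_le {x : ℝ} (hx : 0 < x) : digamma (x + 1/2) - digamma x ≤ 1 / x := by
  have hmono := monotoneOn_digamma (a := x + 1/2) (b := x + 1) (by simp only [mem_Ioi]; linarith)
    (by simp only [mem_Ioi]; linarith) (by linarith)
  linarith [digamma_add_one hx]

theorem tendsto_digamma_add_half_sub :
    Tendsto (fun x => digamma (x + 1/2) - digamma x) atTop (𝓝 0) := by
  refine tendsto_of_tendsto_of_tendsto_of_le_of_le' tendsto_const_nhds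
    (tendsto_const_nhds (x := 1).div_atTop tendsto_id) ?_ ?_
  · filter_upwards [eventually_gt_atTop 0] with x hx using digamma_add_half_sub_nonneg hx
  · filter_upwards [eventually_gt_atTop 0] with x hx using digamma_add_half_sub_le hx

theorem nonneg_of_tendsto_zero_of_add_one_le {f : ℝ → ℝ} (hf : Tendsto f atTop (𝓝 0))
    (hstep : ∀ x, 0 < x → f (x + 1) ≤ f x) {x : ℝ} (hx : 0 < x) : 0 ≤ f x := by
  have hshift (n : ℕ) : f (x + n) ≤ f x := by
    induction n with
    | zero => simp
    | succ n ih =>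
      rw [Nat.cast_succ, ← add_assoc]
      exact (hstep _ (by positivity)).trans ih
  exact le_of_tendsto' (hf.comp (tendsto_atTop_add_const_left _ x tendsto_natCast_atTop_atTop))
    hshift

theorem digamma_lower_bound (z : ℝ) (hz : 0 < z) :
    digamma (z + 1/2) - digamma z > 1 / (2 * z) := by
  set D : ℝ → ℝ := fun x => digamma (x + 1/2) - digamma x - 1 / (2 * x)
  have hD_tendsto : Tendsto D atTop (𝓝 0) := by
    simpa [D] using tendsto_digamma_add_half_sub.sub
      ((tendsto_const_nhds (x := (1 : ℝ))).div_atTop (tendsto_id.const_mul_atTop two_pos))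
  have hD_step (x : ℝ) (hx : 0 < x) : D (x + 1) < D x := by
    have h1 := digamma_add_one hx
    have h2 := digamma_add_one (x := x + 1/2) (by linarith)
    have hconv : 0 < 1 / x - 1 / (2 * x) - 1 / (x + 1/2) + 1 / (2 * (x + 1)) := by
      rw [show 1 / x - 1 / (2 * x) - 1 / (x + 1/2) + 1 / (2 * (x + 1))
        = 1 / (4 * x * (x + 1/2) * (x + 1)) by field_simp; ring]
      positivity
    simp only [D, show x + 1 + 1/2 = x + 1/2 + 1 by ring, h1, h2]
    linarith
  have hD_next : 0 ≤ D (z + 1) :=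
    nonneg_of_tendsto_zero_of_add_one_le hD_tendsto (fun x hx => (hD_step x hx).le) (by linarith)
  linarith [hD_step z hz]
end

section
/- Let N > 1, 2 < p < 6, and θ ∈ (ϑ(p,3), 1), where ϑ(p,d) := d(p−2)/(2p), and set β := 1 − (p−2)/(2pθ). Then the function f(x) := θ(6−p)(x^β − N)x − (2pθ − 3(p−2))[θ(x^β − N) + (1−θ)(x−1)N] has exactly one root in the interval (N^{1/β}, ∞). -/
/-!
With `A = θ(6 - p) > 0` and `C = 2pθ - 3(p - 2) > 0`, for `x > 0` the function is
`A x^(β+1) - Cθ x^β - N(A + C(1 - θ)) x + CN`, which is convex on `[0, ∞)` since `0 < β ≤ 1`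
and tends to `+∞`. At `M = N^(1/β)` we have `M^β = N`, so its value there is
`-C(1 - θ)(M - 1)N < 0`. The intermediate value theorem gives a root beyond `M`, and convexity
makes it unique: once a convex function has risen from a negative value to `0`, it keeps increasing.
-/

open Set Filter

theorem ConvexOn.existsUnique_zero_Ioi {f : ℝ → ℝ} {a : ℝ} (hf : ConvexOn ℝ (Ici a) f)
    (hc : ContinuousOn f (Ici a)) (ha : f a < 0) (htop : Tendsto f atTop atTop) :
    ∃! x, x ∈ Ioi a ∧ f x = 0 := by
  obtain ⟨T, hT, haT⟩ := ((htop.eventually_gt_atTop 0).and (eventually_gt_atTop a)).exists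
  obtain ⟨x, hx, hfx⟩ := intermediate_value_Ioo haT.le (hc.mono Icc_subset_Ici_self) ⟨ha, hT⟩
  have no_later_zero : ∀ y z, a < y → f y = 0 → y < z → f z ≠ 0 := fun y z hy hfy hyz => by
    have hyz' : y ∈ openSegment ℝ a z := by rw [openSegment_eq_Ioo (hy.trans hyz)]; exact ⟨hy, hyz⟩
    have := hf.lt_right_of_left_lt self_mem_Ici (mem_Ici.2 (hy.trans hyz).le) hyz' (hfy ▸ ha)
    linarith
  refine ⟨x, ⟨hx.1, hfx⟩, fun y ⟨hy, hfy⟩ => ?_⟩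
  rcases lt_trichotomy y x with h | rfl | h
  · exact absurd hfx (no_later_zero y x hy hfy h)
  · rfl
  · exact absurd hfy (no_later_zero x y hx.1 hfx h)

section
variable {A B D E b : ℝ}

theorem convexOn_rpow_add_one_sub_rpow (hb0 : 0 ≤ b) (hb1 : b ≤ 1) (hA : 0 ≤ A) (hB : 0 ≤ B) :
    ConvexOn ℝ (Ici 0) fun x : ℝ => A * x ^ (b + 1) - B * x ^ b - D * x + E :=
  ((((convexOn_rpow (by linarith)).smul hA).sub ((Real.concaveOn_rpow hb0 hb1).smul hB)).sub
    ((LinearMap.mul ℝ ℝ D).concaveOn (convex_Ici 0))).add_const E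

theorem tendsto_rpow_add_one_sub_rpow_atTop (hb0 : 0 < b) (hb1 : b ≤ 1) (hA : 0 < A) :
    Tendsto (fun x : ℝ => A * x ^ (b + 1) - B * x ^ b - D * x + E) atTop atTop := by
  have : Tendsto (fun x : ℝ => x * (A * x ^ b - |B| - D) + E) atTop atTop := by
    refine tendsto_atTop_add_const_right _ E (tendsto_id.atTop_mul_atTop₀ ?_)
    simpa only [sub_eq_add_neg, add_assoc] using
      tendsto_atTop_add_const_right _ _ ((tendsto_rpow_atTop hb0).const_mul_atTop hA)
  refine tendsto_atTop_mono' _ ?_ this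
  filter_upwards [eventually_ge_atTop 1] with x hx
  have hxb : x ^ b ≤ x := by simpa using Real.rpow_le_rpow_of_exponent_le hx hb1
  have : B * x ^ b ≤ |B| * x := by
    calc B * x ^ b ≤ |B| * x ^ b := by gcongr; exact le_abs_self B
    _ ≤ |B| * x := by gcongr
  rw [Real.rpow_add_one (by positivity)]
  nlinarith
end

theorem unique_root_f (N p θ : ℝ) (hN : 1 < N) (hp1 : 2 < p) (hp2 : p < 6)
    (hθ1 : 3 * (p - 2) / (2 * p) < θ) (hθ2 : θ < 1) :
    ∃! x : ℝ, x ∈ Set.Ioi (N ^ (1 / (1 - (p - 2) / (2 * p * θ)))) ∧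
      θ * (6 - p) * (x ^ (1 - (p - 2) / (2 * p * θ)) - N) * x
        - (2 * p * θ - 3 * (p - 2)) *
          (θ * (x ^ (1 - (p - 2) / (2 * p * θ)) - N) + (1 - θ) * (x - 1) * N) = 0 := by
  have hθ2p : 3 * (p - 2) < 2 * p * θ := by
    have := (div_lt_iff₀ (by linarith : (0:ℝ) < 2 * p)).1 hθ1
    linarith
  have hθ0 : 0 < θ := by nlinarith
  set β := 1 - (p - 2) / (2 * p * θ)
  have hβ0 : 0 < β := by
    have : (p - 2) / (2 * p * θ) < 1 := (div_lt_one (by positivity)).2 (by linarith)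
    linarith
  have hβ1 : β ≤ 1 := by
    have : 0 ≤ (p - 2) / (2 * p * θ) := div_nonneg (by linarith) (by positivity)
    linarith
  set A := θ * (6 - p)
  set C := 2 * p * θ - 3 * (p - 2)
  have hA : 0 < A := mul_pos hθ0 (by linarith)
  have hC : 0 < C := by linarith
  set M := N ^ (1 / β)
  have hM : 1 < M := Real.one_lt_rpow hN (by positivity)
  have hMβ : M ^ β = N := by
    rw [← Real.rpow_mul (by linarith), one_div_mul_cancel hβ0.ne', Real.rpow_one]
  set g := fun x : ℝ => A * x ^ (β + 1) - C * θ * x ^ β - N * (A + C * (1 - θ)) * x + C * N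
  have hg : ∀ x : ℝ, 0 < x → A * (x ^ β - N) * x
      - C * (θ * (x ^ β - N) + (1 - θ) * (x - 1) * N) = g x := fun x hx => by
    simp only [g, Real.rpow_add_one hx.ne']
    ring
  have hgM : g M < 0 := by
    rw [← hg M (by linarith), hMβ]
    nlinarith [mul_pos (mul_pos hC (sub_pos.2 hθ2)) (mul_pos (sub_pos.2 hM) (by linarith : 0 < N))]
  have hunique := ConvexOn.existsUnique_zero_Ioi
    ((convexOn_rpow_add_one_sub_rpow hβ0.le hβ1 hA.le (by positivity)).subset
      (Ici_subset_Ici.2 (by linarith)) (convex_Ici M))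
    (by fun_prop (disch := positivity)) hgM
    (tendsto_rpow_add_one_sub_rpow_atTop hβ0 hβ1 hA)
  refine (existsUnique_congr fun x => and_congr_right fun hx => ?_).2 hunique
  rw [hg x (by linarith [mem_Ioi.1 hx])]
end

section
/- Under the hypotheses N > 1, 2 < p < 6, θ ∈ (ϑ(p,3), 1), β := 1 − (p−2)/(2pθ), the function f(x) := θ(6−p)(x^β − N)x − (2pθ − 3(p−2))[θ(x^β − N) + (1−θ)(x−1)N] satisfies f'(N^{1/β}) ≥ 2(p−2)(1−θ)N > 0, where f'(x) = (6−p)θ[(1+β)x^β − N] − (2pθ − 3(p−2))[βθ x^{β−1} + (1−θ)N]. -/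
theorem f_deriv_at_left_endpoint (N p θ : ℝ) (hN : 1 < N) (hp1 : 2 < p) (hp2 : p < 6)
    (hθ1 : 3 * (p - 2) / (2 * p) < θ) (hθ2 : θ < 1) :
    (∀ x : ℝ, 0 < x →
      HasDerivAt (fun x : ℝ => θ * (6 - p) * (x ^ (1 - (p - 2) / (2 * p * θ)) - N) * x
          - (2 * p * θ - 3 * (p - 2)) *
            (θ * (x ^ (1 - (p - 2) / (2 * p * θ)) - N) + (1 - θ) * (x - 1) * N))
        ((6 - p) * θ * ((1 + (1 - (p - 2) / (2 * p * θ))) * x ^ (1 - (p - 2) / (2 * p * θ)) - N)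
          - (2 * p * θ - 3 * (p - 2)) *
            ((1 - (p - 2) / (2 * p * θ)) * θ * x ^ ((1 - (p - 2) / (2 * p * θ)) - 1)
              + (1 - θ) * N)) x) ∧
    ((6 - p) * θ * ((1 + (1 - (p - 2) / (2 * p * θ)))
          * (N ^ (1 / (1 - (p - 2) / (2 * p * θ)))) ^ (1 - (p - 2) / (2 * p * θ)) - N)
      - (2 * p * θ - 3 * (p - 2)) *
          ((1 - (p - 2) / (2 * p * θ)) * θ
              * (N ^ (1 / (1 - (p - 2) / (2 * p * θ)))) ^ ((1 - (p - 2) / (2 * p * θ)) - 1)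
            + (1 - θ) * N)
        ≥ 2 * (p - 2) * (1 - θ) * N) ∧
    2 * (p - 2) * (1 - θ) * N > 0 := by
  have hp0 : 0 < p := by linarith
  have hθ0 : 0 < θ := lt_trans (div_pos (by linarith) (by linarith)) hθ1
  have hC : 0 < 2 * p * θ - 3 * (p - 2) := by
    have := (div_lt_iff₀ (by linarith : (0:ℝ) < 2 * p)).mp hθ1
    linarith
  set β : ℝ := 1 - (p - 2) / (2 * p * θ) with hβdef
  have hβ0 : 0 < β := by
    have h1 : (p - 2) / (2 * p * θ) < 1 := by
      rw [div_lt_one (by nlinarith)]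
      nlinarith
    simp only [hβdef]; linarith
  have hβ1 : β < 1 := by
    have : 0 < (p - 2) / (2 * p * θ) := div_pos (by linarith) (by positivity)
    simp only [hβdef]; linarith
  refine ⟨?_, ?_, ?_⟩
  · intro x hx
    have h1 : HasDerivAt (fun x : ℝ => x ^ β) (β * x ^ (β - 1)) x :=
      Real.hasDerivAt_rpow_const (Or.inl hx.ne')
    have h2 : HasDerivAt
        (fun x : ℝ => θ * (6 - p) * (x ^ β - N) * x
          - (2 * p * θ - 3 * (p - 2)) * (θ * (x ^ β - N) + (1 - θ) * (x - 1) * N))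
        (θ * (6 - p) * (β * x ^ (β - 1)) * x + θ * (6 - p) * (x ^ β - N) * 1
          - (2 * p * θ - 3 * (p - 2)) * (θ * (β * x ^ (β - 1)) + (1 - θ) * 1 * N)) x := by
      have hA : HasDerivAt (fun x : ℝ => θ * (6 - p) * (x ^ β - N) * x)
          (θ * (6 - p) * (β * x ^ (β - 1)) * x + θ * (6 - p) * (x ^ β - N) * 1) x :=
        (((h1.sub_const N).const_mul (θ * (6 - p))).mul (hasDerivAt_id x))
      have hB : HasDerivAt
          (fun x : ℝ => (2 * p * θ - 3 * (p - 2)) * (θ * (x ^ β - N) + (1 - θ) * (x - 1) * N))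
          ((2 * p * θ - 3 * (p - 2)) * (θ * (β * x ^ (β - 1)) + (1 - θ) * 1 * N)) x := by
        have hB1 : HasDerivAt (fun x : ℝ => θ * (x ^ β - N)) (θ * (β * x ^ (β - 1))) x :=
          (h1.sub_const N).const_mul θ
        have hB2 : HasDerivAt (fun x : ℝ => (1 - θ) * (x - 1) * N) ((1 - θ) * 1 * N) x := by
          have : HasDerivAt (fun x : ℝ => x - 1) 1 x := (hasDerivAt_id x).sub_const 1
          exact (this.const_mul (1 - θ)).mul_const N
        exact (hB1.add hB2).const_mul _
      exact hA.sub hB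
    convert h2 using 1
    have e : x ^ β = x ^ (β - 1) * x := by
      rw [← Real.rpow_add_one hx.ne' (β - 1)]; ring_nf
    rw [e]; ring
  · set x₀ : ℝ := N ^ (1 / β) with hx₀def
    have hN0 : (0:ℝ) < N := by linarith
    have hx₀1 : 1 ≤ x₀ := Real.one_le_rpow hN.le (by positivity)
    have hpow : x₀ ^ β = N := by
      rw [hx₀def, ← Real.rpow_mul hN0.le, one_div_mul_cancel hβ0.ne', Real.rpow_one]
    have ht : x₀ ^ (β - 1) ≤ N := by
      have h1 : x₀ ^ (β - 1) ≤ 1 :=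
        Real.rpow_le_one_of_one_le_of_nonpos hx₀1 (by linarith)
      linarith
    have hkey : (6 - p) * θ * ((1 + β) * N - N)
        - (2 * p * θ - 3 * (p - 2)) * (β * θ * N + (1 - θ) * N)
        = 2 * (p - 2) * (1 - θ) * N := by
      simp only [hβdef]
      field_simp
      ring
    have hmul : (2 * p * θ - 3 * (p - 2)) * (β * θ) * (x₀ ^ (β - 1)) ≤
        (2 * p * θ - 3 * (p - 2)) * (β * θ) * N :=
      mul_le_mul_of_nonneg_left ht (mul_pos hC (mul_pos hβ0 hθ0)).le
    rw [hpow]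
    nlinarith [hmul, hkey]
  · have h1 : (0:ℝ) < 2 * (p - 2) := by linarith
    have h2 : (0:ℝ) < 1 - θ := by linarith
    positivity
end

section
/- For 2 < p < 6 and ϑ(p,2) < θ ≤ 1, define G(θ,p) := (2/(2 − p(1−θ)))^{(p−2)/(2p)} · ((p+2)/4)^{(6−p)/(2p)} · (2(2 − p(1−θ))/((2θ−1)p + 2))^{(2pθ − 3(p−2))/(2p)} · [Γ(2/(p−2)) Γ((2 − p(1−θ))/(p−2) + 1/2) / (Γ(2/(p−2) + 1/2) Γ((2 − p(1−θ))/(p−2)))]^{(p−2)/p}. Then ∂G/∂θ < 0 for θ ∈ (ϑ(p,2), 1), i.e., θ ↦ G(θ,p) is strictly decreasing on (ϑ(p,2), 1]. -/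
noncomputable def G (θ p : ℝ) : ℝ :=
  (2 / (2 - p * (1 - θ))) ^ ((p - 2) / (2 * p)) *
  ((p + 2) / 4) ^ ((6 - p) / (2 * p)) *
  (2 * (2 - p * (1 - θ)) / ((2 * θ - 1) * p + 2)) ^ ((2 * p * θ - 3 * (p - 2)) / (2 * p)) *
  (Real.Gamma (2 / (p - 2)) * Real.Gamma ((2 - p * (1 - θ)) / (p - 2) + 1 / 2) /
    (Real.Gamma (2 / (p - 2) + 1 / 2) * Real.Gamma ((2 - p * (1 - θ)) / (p - 2)))) ^ ((p - 2) / p)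

/-! Put `x = (2 - p(1 - θ))/(p - 2)`, an increasing function of `θ`. Up to an additive constant,
`log G(θ, p)` is `(p - 2)/p` times
`h(x) = log Γ(x + 1/2) - log Γ(x) - (x - 1/2) log(x + 1/2) + (x - 1) log x`,
so it suffices that `h` is strictly decreasing on `(0, ∞)`. Instead of the digamma bound we use
the one-step difference: `h(x) - h(x + 1) = g(x + 1/2) - g(x)` with `g(t) = t log(1 + 1/t)`, and
`g'` is strictly decreasing, so this difference is strictly decreasing. Log-convexity of `Γ` gives
`log Γ(x + 1/2) - log Γ(x) = (log x)/2 + o(1)`, hence `h(x) → -1/2`, and telescoping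
`h(x) - h(y) = Σₖ ((h - h(· + 1))(x + k) - (h - h(· + 1))(y + k))` shows `h(x) > h(y)` for `x < y`. -/

open Real Filter Topology Set

theorem Filter.Tendsto.strictAntiOn_of_strictAntiOn_sub_add_one {f : ℝ → ℝ} {a c : ℝ}
    (hf : Tendsto f atTop (𝓝 c)) (hstep : StrictAntiOn (fun x => f x - f (x + 1)) (Ioi a)) :
    StrictAntiOn f (Ioi a) := by
  intro x hx y hy hxy
  set S : ℕ → ℝ := fun n => (f x - f (x + n)) - (f y - f (y + n))
  have hS : StrictMono S := strictMono_nat_of_lt_succ fun n => by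
    have := hstep (mem_Ioi.2 (by linarith [mem_Ioi.1 hx, n.cast_nonneg (α := ℝ)]))
      (mem_Ioi.2 (by linarith [mem_Ioi.1 hy, n.cast_nonneg (α := ℝ)])) (by linarith : x + n < y + n)
    simp only [S, Nat.cast_succ, ← add_assoc] at this ⊢
    linarith
  have hshift : ∀ z, Tendsto (fun n : ℕ => f (z + n)) atTop (𝓝 c) := fun z =>
    hf.comp (tendsto_atTop_add_const_left _ z tendsto_natCast_atTop_atTop)
  have hlim : Tendsto S atTop (𝓝 (f x - f y)) := by
    simpa using ((hshift x).const_sub (f x)).sub ((hshift y).const_sub (f y))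
  have h0 : S 0 = 0 := by simp [S]
  have hle := ge_of_tendsto hlim (eventually_atTop.2 ⟨1, fun n hn => hS.monotone hn⟩)
  linarith [hS (zero_lt_one' ℕ)]

theorem StrictAntiOn.sub_comp_add_of_hasDerivAt {g g' : ℝ → ℝ} {a d : ℝ} (hd : 0 < d)
    (hg : ∀ t ∈ Ioi a, HasDerivAt g (g' t) t) (hg' : StrictAntiOn g' (Ioi a)) :
    StrictAntiOn (fun x => g (x + d) - g x) (Ioi a) := by
  have hderiv : ∀ x ∈ Ioi a, HasDerivAt (fun x => g (x + d) - g x) (g' (x + d) - g' x) x :=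
    fun x hx => ((hg (x + d) (mem_Ioi.2 (by linarith [mem_Ioi.1 hx]))).comp_add_const x d).sub
      (hg x hx)
  refine strictAntiOn_of_deriv_neg (convex_Ioi a)
    (fun x hx => (hderiv x hx).continuousAt.continuousWithinAt) fun x hx => ?_
  rw [interior_Ioi] at hx
  rw [(hderiv x hx).deriv, sub_neg]
  exact hg' hx (mem_Ioi.2 (by linarith [mem_Ioi.1 hx])) (by linarith)

theorem log_Gamma_add_half_le {x : ℝ} (hx : 0 < x) :
    log (Gamma (x + 1 / 2)) ≤ log (Gamma x) + log x / 2 := by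
  have h := convexOn_log_Gamma.2 (mem_Ioi.2 hx) (mem_Ioi.2 (by linarith : (0:ℝ) < x + 1))
    (by norm_num : (0:ℝ) ≤ 1 / 2) (by norm_num : (0:ℝ) ≤ 1 / 2) (by norm_num)
  simp only [Function.comp, smul_eq_mul] at h
  rw [Gamma_add_one hx.ne', log_mul hx.ne' (Gamma_pos_of_pos hx).ne'] at h
  calc log (Gamma (x + 1 / 2)) = log (Gamma (1 / 2 * x + 1 / 2 * (x + 1))) := by ring_nf
    _ ≤ _ := h
    _ = _ := by ring

theorem tendsto_mul_log_add_sub_log (a : ℝ) :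
    Tendsto (fun x => x * (log (x + a) - log x)) atTop (𝓝 a) := by
  refine (tendsto_mul_log_one_add_div_atTop a).congr' ?_
  filter_upwards [eventually_gt_atTop |a|] with x hx
  have hx0 : 0 < x := (abs_nonneg a).trans_lt hx
  rw [← log_div (by linarith [neg_abs_le a]) hx0.ne', add_div, div_self hx0.ne', add_comm]

theorem tendsto_log_add_sub_log (a : ℝ) :
    Tendsto (fun x => log (x + a) - log x) atTop (𝓝 0) := by
  have h := (tendsto_mul_log_add_sub_log a).mul tendsto_inv_atTop_zero
  rw [mul_zero] at h
  refine h.congr' ?_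
  filter_upwards [eventually_ne_atTop 0] with x hx
  field_simp

theorem tendsto_log_Gamma_add_half_sub_log_Gamma :
    Tendsto (fun x => log (Gamma (x + 1 / 2)) - log (Gamma x) - log x / 2) atTop (𝓝 0) := by
  have hlower := ((tendsto_log_add_sub_log (1 / 2)).div_const 2).neg
  rw [zero_div, neg_zero] at hlower
  refine tendsto_of_tendsto_of_tendsto_of_le_of_le' hlower tendsto_const_nhds ?_ ?_
  · filter_upwards [eventually_gt_atTop 0] with x hx
    have h := log_Gamma_add_half_le (by linarith : 0 < x + 1 / 2)
    rw [add_assoc, add_halves, Gamma_add_one hx.ne', log_mul hx.ne' (Gamma_pos_of_pos hx).ne'] at h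
    linarith
  · filter_upwards [eventually_gt_atTop 0] with x hx
    linarith [log_Gamma_add_half_le hx]

noncomputable def gammaHalfDefect (x : ℝ) : ℝ :=
  log (Gamma (x + 1 / 2)) - log (Gamma x) - (x - 1 / 2) * log (x + 1 / 2) + (x - 1) * log x

theorem tendsto_gammaHalfDefect : Tendsto gammaHalfDefect atTop (𝓝 (-1 / 2)) := by
  have h := tendsto_log_Gamma_add_half_sub_log_Gamma.sub
    ((tendsto_mul_log_add_sub_log (1 / 2)).sub ((tendsto_log_add_sub_log (1 / 2)).const_mul (1 / 2)))
  convert h using 1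
  · ext x
    simp only [gammaHalfDefect]
    ring
  · norm_num

theorem strictAntiOn_log_add_one_sub_log_sub_inv :
    StrictAntiOn (fun t => log (t + 1) - log t - (t + 1)⁻¹) (Ioi 0) := by
  intro s hs t ht hst
  rw [mem_Ioi] at hs ht
  have hr : 0 < (s + 1) * t / (s * (t + 1)) := by positivity
  have hlog := one_sub_inv_le_log_of_pos hr
  rw [log_div (by positivity) (by positivity), log_mul (by positivity) (by positivity),
    log_mul (by positivity) (by positivity), inv_div] at hlog
  have hgap : (s + 1)⁻¹ - (t + 1)⁻¹ < 1 - s * (t + 1) / ((s + 1) * t) := by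
    rw [show 1 - s * (t + 1) / ((s + 1) * t) = (t - s) / ((s + 1) * t) by field_simp; ring,
      show (s + 1)⁻¹ - (t + 1)⁻¹ = (t - s) / ((s + 1) * (t + 1)) by field_simp; ring]
    exact div_lt_div_of_pos_left (by linarith) (by positivity) (by nlinarith)
  linarith

theorem hasDerivAt_mul_log_add_one_sub_log {t : ℝ} (ht : 0 < t) :
    HasDerivAt (fun t => t * (log (t + 1) - log t)) (log (t + 1) - log t - (t + 1)⁻¹) t := by
  have h : HasDerivAt (fun t => t * (log (t + 1) - log t))
      (1 * (log (t + 1) - log t) + t * (1 / (t + 1) - t⁻¹)) t :=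
    (hasDerivAt_id' t).mul ((((hasDerivAt_id' t).add_const 1).log (by positivity)).sub
      (hasDerivAt_log ht.ne'))
  convert h using 1
  field_simp
  ring

theorem gammaHalfDefect_sub_gammaHalfDefect_add_one {x : ℝ} (hx : 0 < x) :
    gammaHalfDefect x - gammaHalfDefect (x + 1) =
      (x + 1 / 2) * (log (x + 1 / 2 + 1) - log (x + 1 / 2)) - x * (log (x + 1) - log x) := by
  have hx' : 0 < x + 1 / 2 := by linarith
  rw [gammaHalfDefect, gammaHalfDefect, add_right_comm x 1 (1 / 2), Gamma_add_one hx'.ne',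
    Gamma_add_one hx.ne', log_mul hx'.ne' (Gamma_pos_of_pos hx').ne',
    log_mul hx.ne' (Gamma_pos_of_pos hx).ne']
  ring

theorem strictAntiOn_gammaHalfDefect : StrictAntiOn gammaHalfDefect (Ioi 0) := by
  refine tendsto_gammaHalfDefect.strictAntiOn_of_strictAntiOn_sub_add_one ?_
  refine (StrictAntiOn.sub_comp_add_of_hasDerivAt (by norm_num : (0 : ℝ) < 1 / 2)
    (fun t ht => hasDerivAt_mul_log_add_one_sub_log ht)
    strictAntiOn_log_add_one_sub_log_sub_inv).congr fun x hx => ?_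
  exact (gammaHalfDefect_sub_gammaHalfDefect_add_one hx).symm

theorem two_sub_mul_one_sub_div_pos {p θ : ℝ} (hp : 2 < p) (hθ : (p - 2) / p < θ) :
    0 < (2 - p * (1 - θ)) / (p - 2) := by
  rw [div_lt_iff₀ (by linarith)] at hθ
  exact div_pos (by nlinarith) (by linarith)

theorem G_eq_exp_gammaHalfDefect {p : ℝ} (hp : 2 < p) : ∃ c, ∀ θ, (p - 2) / p < θ →
    G θ p = exp (c + (p - 2) / p * gammaHalfDefect ((2 - p * (1 - θ)) / (p - 2))) := by
  have hp2 : 0 < p - 2 := by linarith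
  have hΓa : 0 < Gamma (2 / (p - 2)) := Gamma_pos_of_pos (by positivity)
  have hΓa' : 0 < Gamma (2 / (p - 2) + 1 / 2) := Gamma_pos_of_pos (by positivity)
  refine ⟨(p - 2) / (2 * p) * (log 2 - log (p - 2)) + (6 - p) / (2 * p) * log ((p + 2) / 4) +
    (p - 2) / p * (log (Gamma (2 / (p - 2))) - log (Gamma (2 / (p - 2) + 1 / 2))),
    fun θ hθ => ?_⟩
  obtain ⟨x, hxdef⟩ : ∃ x, (2 - p * (1 - θ)) / (p - 2) = x := ⟨_, rfl⟩
  have hs : 2 - p * (1 - θ) = (p - 2) * x := by rw [← hxdef]; field_simp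
  have hx : 0 < x := hxdef ▸ two_sub_mul_one_sub_div_pos hp hθ
  have hbase : 2 * (2 - p * (1 - θ)) / ((2 * θ - 1) * p + 2) = x / (x + 1 / 2) := by
    rw [show (2 * θ - 1) * p + 2 = 2 * (2 - p * (1 - θ)) + (p - 2) by ring, hs]
    field_simp
  have hexp : (2 * p * θ - 3 * (p - 2)) / (2 * p) = (p - 2) / p * (x - 1 / 2) := by
    rw [show 2 * p * θ - 3 * (p - 2) = 2 * (2 - p * (1 - θ)) - (p - 2) by ring, hs]
    field_simp
  have hΓx : 0 < Gamma x := Gamma_pos_of_pos hx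
  have hΓx' : 0 < Gamma (x + 1 / 2) := Gamma_pos_of_pos (by positivity)
  rw [G, hbase, hexp, hxdef, hs, rpow_def_of_pos (by positivity), rpow_def_of_pos (by positivity),
    rpow_def_of_pos (by positivity), rpow_def_of_pos (by positivity), ← exp_add, ← exp_add,
    ← exp_add, log_div two_ne_zero (mul_pos hp2 hx).ne', log_mul hp2.ne' hx.ne',
    log_div hx.ne' (by positivity),
    log_div (mul_pos hΓa hΓx').ne' (mul_pos hΓa' hΓx).ne',
    log_mul hΓa.ne' hΓx'.ne', log_mul hΓa'.ne' hΓx.ne', gammaHalfDefect]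
  congr 1
  ring

theorem G_strictAnti_general (p : ℝ) (hp1 : 2 < p) :
    StrictAntiOn (fun θ : ℝ => G θ p) (Set.Ioc ((p - 2) / p) 1) := by
  obtain ⟨c, hc⟩ := G_eq_exp_gammaHalfDefect hp1
  intro θ₁ hθ₁ θ₂ hθ₂ hθ
  have hp2 : 0 < p - 2 := by linarith
  have hx : (2 - p * (1 - θ₁)) / (p - 2) < (2 - p * (1 - θ₂)) / (p - 2) :=
    div_lt_div_of_pos_right (by nlinarith) hp2
  show G θ₂ p < G θ₁ p
  rw [hc θ₁ hθ₁.1, hc θ₂ hθ₂.1, exp_lt_exp, add_lt_add_iff_left]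
  exact mul_lt_mul_of_pos_left (strictAntiOn_gammaHalfDefect (two_sub_mul_one_sub_div_pos hp1 hθ₁.1)
    (two_sub_mul_one_sub_div_pos hp1 hθ₂.1) hx) (by positivity)

theorem G_strictAnti (p : ℝ) (hp1 : 2 < p) (hp2 : p < 6) :
    StrictAntiOn (fun θ : ℝ => G θ p) (Set.Ioc ((p - 2) / p) 1) :=
  G_strictAnti_general p hp1
end
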